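/- arXiv:1309.3241 — 2 statements merged into one kernel-verified Lean document; each statement's English description precedes it below -/
import Mathlib

section
/- Let g be a generalized Hermite kernel of order k with homogeneity exponent α, and set H = α + k/2 + 1 ∈ (1/2,1). Then for every t > 0: (i) ∫_0^t |g(s·1 − x)| ds < ∞ for almost every x ∈ ℝ^k; (ii) the function h_t(x) = ∫_0^t g(s·1 − x) ds belongs to L²(ℝ^k); and (iii) ∫_{ℝ^k} h_t(x)² dx = (t^{2H} / (H(2H−1))) · ∫_{(0,∞)^k} g(y) g(1+y) dy. -/
open MeasureTheory Filter

noncomputable section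

/-- The open positive orthant `(0,∞)^k` in `ℝ^k`. -/
def posOrthant (k : ℕ) : Set (Fin k → ℝ) := {x | ∀ j, 0 < x j}

/-- A generalized Hermite kernel of order `k` with homogeneity exponent `α`:
a nonzero measurable function on `(0,∞)^k`, extended by `0` off the positive orthant,
homogeneous of exponent `α ∈ (-(k+1)/2, -k/2)`, satisfying the integrability condition
`∫_{(0,∞)^k} |g(x) g(1+x)| dx < ∞`. -/
structure IsGenHermiteKernel (k : ℕ) (α : ℝ) (g : (Fin k → ℝ) → ℝ) : Prop where
  measurable : Measurable g
  zero_off : ∀ x : Fin k → ℝ, x ∉ posOrthant k → g x = 0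
  nonzero : ¬ (∀ᵐ x ∂(volume.restrict (posOrthant k)), g x = 0)
  homog : ∀ lam : ℝ, 0 < lam → ∀ x ∈ posOrthant k, g (lam • x) = lam ^ α * g x
  alpha_lb : -((k : ℝ) + 1) / 2 < α
  alpha_ub : α < -(k : ℝ) / 2
  int_cond : IntegrableOn (fun x => g x * g (1 + x)) (posOrthant k) volume

/-- `h_t(x) = ∫_0^t g(s·1 − x) ds`. -/
def hKer {k : ℕ} (g : (Fin k → ℝ) → ℝ) (t : ℝ) (x : Fin k → ℝ) : ℝ :=
  ∫ s in Set.Ioc (0 : ℝ) t, g (fun j => s - x j)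

open Set

/-! For `s ≠ u`, translating by `s·1` and rescaling by `|u − s|` turns
`∫ g(s·1 − x) g(u·1 − x) dx` into `|u − s|^β ∫ g(y) g(1 + y) dy` with `β = 2α + k = 2H − 2 > −1`.
Expanding the square of `h_t` and swapping the integrals by Fubini therefore gives
`‖h_t‖² = (∫∫_{(0,t]²} |u − s|^β ds du) · ∫ g(y) g(1 + y) dy`, and the double integral is
`2 t^{β+2} / ((β+1)(β+2))`. The same computation for `|g|` supplies the absolute integrability
that Fubini needs, and integrability of `(s, u) ↦ g(s·1 − x) g(u·1 − x)` for almost every `x`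
forces that of `s ↦ g(s·1 − x)`. -/

section AbsSubRpow
open intervalIntegral
variable {β : ℝ}

lemma intervalIntegrable_abs_rpow (hβ : -1 < β) (a b : ℝ) :
    IntervalIntegrable (fun x : ℝ => |x| ^ β) volume a b := by
  have h_nonneg (c : ℝ) (hc : 0 ≤ c) : IntervalIntegrable (fun x : ℝ => |x| ^ β) volume 0 c :=
    (intervalIntegrable_rpow' hβ).congr fun x hx => by
      rw [uIoc_of_le hc] at hx
      simp only [abs_of_pos hx.1]
  have h_zero (c : ℝ) : IntervalIntegrable (fun x : ℝ => |x| ^ β) volume 0 c := by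
    rcases le_total 0 c with hc | hc
    · exact h_nonneg c hc
    · rw [IntervalIntegrable.iff_comp_neg]
      simpa using h_nonneg (-c) (by linarith)
  exact (h_zero a).symm.trans (h_zero b)

lemma integral_abs_rpow_of_nonneg (hβ : -1 < β) {c : ℝ} (hc : 0 ≤ c) :
    ∫ x in 0..c, |x| ^ β = c ^ (β + 1) / (β + 1) := by
  rw [integral_congr (g := fun x => x ^ β) fun x hx => ?_, integral_rpow (Or.inl hβ),
    Real.zero_rpow (by linarith), sub_zero]
  rw [uIcc_of_le hc] at hx
  simp only [abs_of_nonneg hx.1]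

lemma integral_abs_sub_rpow (hβ : -1 < β) {a b c : ℝ} (hac : a ≤ c) (hcb : c ≤ b) :
    ∫ x in a..b, |x - c| ^ β = ((c - a) ^ (β + 1) + (b - c) ^ (β + 1)) / (β + 1) := by
  have h_left : ∫ x in a - c..0, |x| ^ β = ∫ x in 0..c - a, |x| ^ β := by
    simpa using (integral_comp_neg (a := 0) (b := c - a) fun x => |x| ^ β).symm
  rw [integral_comp_sub_right (fun x => |x| ^ β), ← integral_add_adjacent_intervals
    (intervalIntegrable_abs_rpow hβ _ 0) (intervalIntegrable_abs_rpow hβ 0 _), h_left,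
    integral_abs_rpow_of_nonneg hβ (by linarith), integral_abs_rpow_of_nonneg hβ (by linarith),
    add_div]

variable {t : ℝ}

lemma intervalIntegrable_sub_rpow (hβ : -1 < β) :
    IntervalIntegrable (fun s : ℝ => (t - s) ^ β) volume 0 t := by
  simpa using (intervalIntegrable_rpow' hβ (a := t - 0) (b := t - t)).comp_sub_left t

lemma setIntegral_Ioc_abs_sub_rpow (hβ : -1 < β) {s : ℝ} (hs : s ∈ Ioc 0 t) :
    ∫ u in Ioc 0 t, |u - s| ^ β = (s ^ (β + 1) + (t - s) ^ (β + 1)) / (β + 1) := by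
  rw [← integral_of_le (hs.1.le.trans hs.2), integral_abs_sub_rpow hβ hs.1.le hs.2, sub_zero]

lemma integrable_abs_sub_rpow_prod (hβ : -1 < β) (ht : 0 ≤ t) :
    Integrable (fun p : ℝ × ℝ => |p.2 - p.1| ^ β)
      ((volume.restrict (Ioc 0 t)).prod (volume.restrict (Ioc 0 t))) := by
  have hβ' : -1 < β + 1 := by linarith
  have h_meas : Measurable fun p : ℝ × ℝ => |p.2 - p.1| ^ β := by fun_prop
  rw [integrable_prod_iff h_meas.aestronglyMeasurable]
  constructor
  · refine Eventually.of_forall fun s => (intervalIntegrable_iff_integrableOn_Ioc_of_le ht).1 ?_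
    simpa using (intervalIntegrable_abs_rpow hβ (0 - s) (t - s)).comp_sub_right s
  · refine ((intervalIntegrable_iff_integrableOn_Ioc_of_le ht).1
      (((intervalIntegrable_rpow' hβ').add (intervalIntegrable_sub_rpow hβ')).div_const
        (β + 1))).congr ?_
    filter_upwards [ae_restrict_mem measurableSet_Ioc] with s hs
    simp only [Real.norm_eq_abs, abs_of_nonneg (Real.rpow_nonneg (abs_nonneg _) _),
      setIntegral_Ioc_abs_sub_rpow hβ hs]

lemma integral_abs_sub_rpow_prod (hβ : -1 < β) (ht : 0 ≤ t) :
    ∫ p : ℝ × ℝ, |p.2 - p.1| ^ β ∂(volume.restrict (Ioc 0 t)).prod (volume.restrict (Ioc 0 t))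
      = 2 * t ^ (β + 2) / ((β + 1) * (β + 2)) := by
  have hβ' : -1 < β + 1 := by linarith
  rw [integral_prod _ (integrable_abs_sub_rpow_prod hβ ht),
    setIntegral_congr_fun measurableSet_Ioc fun s hs => setIntegral_Ioc_abs_sub_rpow hβ hs,
    ← integral_of_le ht, intervalIntegral.integral_div,
    integral_add (intervalIntegrable_rpow' hβ') (intervalIntegrable_sub_rpow hβ'),
    integral_comp_sub_left (fun s => s ^ (β + 1)), sub_self, sub_zero, integral_rpow (Or.inl hβ'),
    Real.zero_rpow (by linarith), show β + 1 + 1 = β + 2 by ring]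
  field_simp
  ring

end AbsSubRpow

lemma integrable_of_integrable_mul_prod {X E : Type*} [MeasurableSpace X] [NormedDivisionRing E]
    {μ : Measure X} [SFinite μ] {f : X → E} (hf : AEStronglyMeasurable f μ)
    (h : Integrable (fun p : X × X => f p.1 * f p.2) (μ.prod μ)) : Integrable f μ := by
  refine ⟨hf, ?_⟩
  have h_sq : (∫⁻ x, ‖f x‖ₑ ∂μ) * ∫⁻ x, ‖f x‖ₑ ∂μ < ⊤ := by
    simpa only [HasFiniteIntegral, enorm_mul, lintegral_prod_mul hf.enorm hf.enorm] using h.2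
  exact ENNReal.mul_self_lt_top_iff.1 h_sq

lemma ae_fst_ne_snd {X : Type*} [MeasurableSpace X] [MeasurableEq X] {μ : Measure X}
    [SFinite μ] [NullSingletonClass μ] : ∀ᵐ p ∂μ.prod μ, p.1 ≠ p.2 :=
  (Measure.ae_prod_iff_ae_ae measurableSet_diagonal.compl).2 <| Eventually.of_forall fun x =>
    ((countable_singleton x).ae_notMem μ).mono fun _ hy => Ne.symm hy

section Homogeneous
variable {k : ℕ} {α : ℝ} {f : (Fin k → ℝ) → ℝ}

lemma mul_const_sub_eq_rpow_mul (hf : ∀ {r : ℝ}, 0 < r → ∀ x, f (r • x) = r ^ α * f x)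
    {s u : ℝ} (hsu : s < u) (x : Fin k → ℝ) :
    f (fun j => s - x j) * f (fun j => u - x j) =
      (u - s) ^ (2 * α) * (f ((u - s)⁻¹ • (Function.const _ s - x)) *
        f (1 + (u - s)⁻¹ • (Function.const _ s - x))) := by
  have hr : 0 < u - s := sub_pos.2 hsu
  set y := (u - s)⁻¹ • (Function.const (Fin k) s - x)
  have hs : (fun j => s - x j) = (u - s) • y := by
    rw [smul_inv_smul₀ hr.ne']
    rfl
  have hu : (fun j => u - x j) = (u - s) • (1 + y) := by
    rw [smul_add, ← hs]
    funext j
    simp only [Pi.add_apply, Pi.smul_apply, Pi.one_apply, smul_eq_mul]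
    ring
  rw [hs, hu, hf hr, hf hr, two_mul, Real.rpow_add hr]
  ring

lemma integrable_mul_const_sub (hf : ∀ {r : ℝ}, 0 < r → ∀ x, f (r • x) = r ^ α * f x)
    (hint : Integrable fun y => f y * f (1 + y)) {s u : ℝ} (hsu : s ≠ u) :
    Integrable fun x : Fin k → ℝ => f (fun j => s - x j) * f (fun j => u - x j) := by
  wlog h : s < u generalizing s u
  · simpa only [mul_comm] using this hsu.symm (hsu.symm.lt_of_le (not_lt.1 h))
  simp_rw [mul_const_sub_eq_rpow_mul hf h]
  have h_smul := (integrable_comp_smul_iff volume _ (inv_ne_zero (sub_pos.2 h).ne')).2 hint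
  exact (h_smul.comp_sub_left _).const_mul _

lemma integral_mul_const_sub (hf : ∀ {r : ℝ}, 0 < r → ∀ x, f (r • x) = r ^ α * f x)
    {s u : ℝ} (hsu : s ≠ u) :
    ∫ x : Fin k → ℝ, f (fun j => s - x j) * f (fun j => u - x j) =
      |u - s| ^ (2 * α + k) * ∫ y, f y * f (1 + y) := by
  wlog h : s < u generalizing s u
  · simpa only [mul_comm, abs_sub_comm] using this hsu.symm (hsu.symm.lt_of_le (not_lt.1 h))
  have hr : 0 < u - s := sub_pos.2 h
  simp_rw [mul_const_sub_eq_rpow_mul hf h]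
  rw [integral_const_mul,
    integral_sub_left_eq_self (fun x => f ((u - s)⁻¹ • x) * f (1 + (u - s)⁻¹ • x)),
    Measure.integral_comp_inv_smul_of_nonneg volume (fun y => f y * f (1 + y)) hr.le,
    Module.finrank_fin_fun, smul_eq_mul, abs_of_pos hr, Real.rpow_add hr, Real.rpow_natCast]
  ring

variable {ν : Measure ℝ} [SFinite ν]

lemma integrable_mul_const_sub_prod [NullSingletonClass ν]
    (hf : ∀ {r : ℝ}, 0 < r → ∀ x, f (r • x) = r ^ α * f x) (hmeas : Measurable f)
    (hint : Integrable fun y => f y * f (1 + y))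
    (hν : Integrable (fun p : ℝ × ℝ => |p.2 - p.1| ^ (2 * α + k)) (ν.prod ν)) :
    Integrable (fun q : (ℝ × ℝ) × (Fin k → ℝ) =>
      f (fun j => q.1.1 - q.2 j) * f (fun j => q.1.2 - q.2 j)) ((ν.prod ν).prod volume) := by
  have hf_abs {r : ℝ} (hr : 0 < r) (x : Fin k → ℝ) : |f (r • x)| = r ^ α * |f x| := by
    rw [hf hr, abs_mul, abs_of_pos (Real.rpow_pos_of_pos hr α)]
  rw [integrable_prod_iff (by fun_prop)]
  constructor
  · filter_upwards [ae_fst_ne_snd] with p hp using integrable_mul_const_sub hf hint hp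
  · refine (hν.mul_const (∫ y, |f y| * |f (1 + y)|)).congr ?_
    filter_upwards [ae_fst_ne_snd] with p hp
    simp only [norm_mul, Real.norm_eq_abs]
    exact (integral_mul_const_sub hf_abs hp).symm

lemma sq_integral_const_sub (x : Fin k → ℝ) :
    (∫ s, f (fun j => s - x j) ∂ν) ^ 2 =
      ∫ p : ℝ × ℝ, f (fun j => p.1 - x j) * f (fun j => p.2 - x j) ∂ν.prod ν := by
  rw [sq, ← integral_prod_mul]

lemma ae_integrable_const_sub (hmeas : Measurable f)
    (hF : Integrable (fun q : (ℝ × ℝ) × (Fin k → ℝ) =>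
      f (fun j => q.1.1 - q.2 j) * f (fun j => q.1.2 - q.2 j)) ((ν.prod ν).prod volume)) :
    ∀ᵐ x : Fin k → ℝ, Integrable (fun s => f (fun j => s - x j)) ν := by
  filter_upwards [hF.swap.prod_right_ae] with x hx
  exact integrable_of_integrable_mul_prod (hmeas.comp (by fun_prop)).aestronglyMeasurable hx

lemma memLp_two_integral_const_sub (hmeas : Measurable f)
    (hF : Integrable (fun q : (ℝ × ℝ) × (Fin k → ℝ) =>
      f (fun j => q.1.1 - q.2 j) * f (fun j => q.1.2 - q.2 j)) ((ν.prod ν).prod volume)) :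
    MemLp (fun x : Fin k → ℝ => ∫ s, f (fun j => s - x j) ∂ν) 2 := by
  have h_meas : Measurable fun q : (Fin k → ℝ) × ℝ => f (fun j => q.2 - q.1 j) := by fun_prop
  rw [memLp_two_iff_integrable_sq
    h_meas.stronglyMeasurable.integral_prod_right'.aestronglyMeasurable]
  simp_rw [sq_integral_const_sub]
  exact hF.integral_prod_right

lemma integral_sq_integral_const_sub [NullSingletonClass ν]
    (hf : ∀ {r : ℝ}, 0 < r → ∀ x, f (r • x) = r ^ α * f x)
    (hF : Integrable (fun q : (ℝ × ℝ) × (Fin k → ℝ) =>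
      f (fun j => q.1.1 - q.2 j) * f (fun j => q.1.2 - q.2 j)) ((ν.prod ν).prod volume)) :
    ∫ x : Fin k → ℝ, (∫ s, f (fun j => s - x j) ∂ν) ^ 2 =
      (∫ p : ℝ × ℝ, |p.2 - p.1| ^ (2 * α + k) ∂ν.prod ν) * ∫ y, f y * f (1 + y) := by
  simp_rw [sq_integral_const_sub]
  rw [integral_integral_swap (f := fun (x : Fin k → ℝ) (p : ℝ × ℝ) =>
    f (fun j => p.1 - x j) * f (fun j => p.2 - x j)) hF.swap, ← integral_mul_const]
  refine integral_congr_ae ?_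
  filter_upwards [ae_fst_ne_snd] with p hp using integral_mul_const_sub hf hp

end Homogeneous

namespace IsGenHermiteKernel
variable {k : ℕ} {α : ℝ} {g : (Fin k → ℝ) → ℝ}

lemma map_smul (hg : IsGenHermiteKernel k α g) {r : ℝ} (hr : 0 < r) (x : Fin k → ℝ) :
    g (r • x) = r ^ α * g x := by
  by_cases hx : x ∈ posOrthant k
  · exact hg.homog r hr x hx
  · have hrx : r • x ∉ posOrthant k := fun h => hx fun j => pos_of_mul_pos_right (h j) hr.le
    rw [hg.zero_off _ hrx, hg.zero_off _ hx, mul_zero]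

lemma integrable_mul_one_add (hg : IsGenHermiteKernel k α g) :
    Integrable fun y => g y * g (1 + y) :=
  hg.int_cond.integrable_of_forall_notMem_eq_zero fun y hy => by rw [hg.zero_off y hy, zero_mul]

end IsGenHermiteKernel

theorem stmt0_general {k : ℕ} {α : ℝ} {g : (Fin k → ℝ) → ℝ}
    (hg : IsGenHermiteKernel k α g) {t : ℝ} (ht : 0 < t) :
    (∀ᵐ x : Fin k → ℝ, IntegrableOn (fun s => g (fun j => s - x j)) (Set.Ioc 0 t) volume) ∧
    MemLp (hKer g t) 2 volume ∧
    (∫ x : Fin k → ℝ, (hKer g t x) ^ 2) =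
      t ^ (2 * (α + k / 2 + 1)) / ((α + k / 2 + 1) * (2 * (α + k / 2 + 1) - 1)) *
        ∫ y in posOrthant k, g y * g (1 + y) := by
  have hβ : -1 < 2 * α + k := by linarith [hg.alpha_lb]
  have hF := integrable_mul_const_sub_prod hg.map_smul hg.measurable hg.integrable_mul_one_add
    (integrable_abs_sub_rpow_prod hβ ht.le)
  refine ⟨ae_integrable_const_sub hg.measurable hF, memLp_two_integral_const_sub hg.measurable hF,
    (integral_sq_integral_const_sub hg.map_smul hF).trans ?_⟩
  rw [integral_abs_sub_rpow_prod hβ ht.le,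
    setIntegral_eq_integral_of_forall_compl_eq_zero fun y hy => by rw [hg.zero_off y hy, zero_mul],
    show 2 * (α + k / 2 + 1) = 2 * α + k + 2 by ring]
  congr 1
  field_simp
  ring

theorem stmt0 {k : ℕ} (hk : 1 ≤ k) {α : ℝ} {g : (Fin k → ℝ) → ℝ}
    (hg : IsGenHermiteKernel k α g) {t : ℝ} (ht : 0 < t) :
    (∀ᵐ x : Fin k → ℝ, IntegrableOn (fun s => g (fun j => s - x j)) (Set.Ioc 0 t) volume) ∧
    MemLp (hKer g t) 2 volume ∧
    (∫ x : Fin k → ℝ, (hKer g t x) ^ 2) =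
      t ^ (2 * (α + k / 2 + 1)) / ((α + k / 2 + 1) * (2 * (α + k / 2 + 1) - 1)) *
        ∫ y in posOrthant k, g y * g (1 + y) :=
  stmt0_general hg ht
end
end

section
/- Let g₁ be a generalized Hermite kernel of order k₁ with homogeneity exponent α₁ and g₂ a generalized Hermite kernel of order k₂ with homogeneity exponent α₂, and suppose α₁ + α₂ > −(k₁ + k₂ + 1)/2. Then the tensor product (g₁ ⊗ g₂)(x, y) := g₁(x) g₂(y), for x ∈ (0,∞)^{k₁}, y ∈ (0,∞)^{k₂}, is a generalized Hermite kernel of order k₁ + k₂ with homogeneity exponent α₁ + α₂. -/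
/-!
Splitting the coordinates of `ℝ^(k₁+k₂)` identifies Lebesgue measure on the positive orthant
with the product of the Lebesgue measures on the two smaller orthants. Under this identification
the tensor product `g₁ ⊗ g₂` is a product of functions of independent variables, so homogeneity
exponents add, its support is the product of the supports (hence not null), and the integrand
`(g₁ ⊗ g₂)(x) (g₁ ⊗ g₂)(1 + x)` is the tensor product of two integrable functions.
-/

open MeasureTheory Filter

noncomputable section

namespace MeasurableEquiv

variable (α : Type*) [MeasurableSpace α] (m n : ℕ)

def finAppend : (Fin m → α) × (Fin n → α) ≃ᵐ (Fin (m + n) → α) :=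
  (sumPiEquivProdPi fun _ => α).symm.trans (piCongrLeft (fun _ => α) finSumFinEquiv)

variable {α m n}

theorem finAppend_apply (p : (Fin m → α) × (Fin n → α)) :
    finAppend α m n p = Fin.append p.1 p.2 := by
  ext i
  induction i using Fin.addCases with
  | left i =>
    rw [Fin.append_left, ← finSumFinEquiv_apply_left]
    exact Equiv.piCongrLeft_sumInl (fun _ => α) finSumFinEquiv p.1 p.2 i
  | right j =>
    rw [Fin.append_right, ← finSumFinEquiv_apply_right]
    exact Equiv.piCongrLeft_sumInr (fun _ => α) finSumFinEquiv p.1 p.2 j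

theorem measurePreserving_finAppend {α : Type*} [MeasureSpace α] [SigmaFinite (volume : Measure α)] :
    MeasurePreserving (finAppend α m n) volume volume :=
  (volume_measurePreserving_piCongrLeft (fun _ => α) finSumFinEquiv).comp
    (volume_measurePreserving_sumPiEquivProdPi_symm fun _ => α)

end MeasurableEquiv

open MeasurableEquiv

theorem measurableSet_posOrthant (k : ℕ) : MeasurableSet (posOrthant k) := by
  have : posOrthant k = Set.univ.pi fun _ => Set.Ioi 0 := by
    ext x
    simp [posOrthant]
  exact this ▸ MeasurableSet.univ_pi fun _ => measurableSet_Ioi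

variable {m n : ℕ}

theorem mem_posOrthant_add_iff {x : Fin (m + n) → ℝ} :
    x ∈ posOrthant (m + n) ↔
      (fun i => x (Fin.castAdd n i)) ∈ posOrthant m ∧ (fun j => x (Fin.natAdd m j)) ∈ posOrthant n :=
  Fin.forall_fin_add _

theorem finAppend_preimage_posOrthant :
    finAppend ℝ m n ⁻¹' posOrthant (m + n) = posOrthant m ×ˢ posOrthant n := by
  ext p
  simp [finAppend_apply, mem_posOrthant_add_iff]

theorem measurePreserving_finAppend_posOrthant :
    MeasurePreserving (finAppend ℝ m n)
      ((volume.restrict (posOrthant m)).prod (volume.restrict (posOrthant n)))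
      (volume.restrict (posOrthant (m + n))) := by
  have h := (measurePreserving_finAppend (m := m) (n := n)).restrict_preimage
    (measurableSet_posOrthant (m + n))
  rwa [finAppend_preimage_posOrthant, Measure.volume_eq_prod, ← Measure.prod_restrict] at h

theorem not_ae_mul_eq_zero_prod {α β : Type*} [MeasurableSpace α] [MeasurableSpace β]
    {μ : Measure α} {ν : Measure β} [SFinite ν] {f : α → ℝ} {g : β → ℝ}
    (hf : ¬ ∀ᵐ x ∂μ, f x = 0) (hg : ¬ ∀ᵐ y ∂ν, g y = 0) :
    ¬ ∀ᵐ p ∂μ.prod ν, f p.1 * g p.2 = 0 := by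
  simp only [ae_iff, mul_ne_zero_iff] at hf hg ⊢
  rw [show {p : α × β | f p.1 ≠ 0 ∧ g p.2 ≠ 0} = {x | f x ≠ 0} ×ˢ {y | g y ≠ 0} from rfl,
    Measure.prod_prod]
  exact mul_ne_zero hf hg

def finTensor (g₁ : (Fin m → ℝ) → ℝ) (g₂ : (Fin n → ℝ) → ℝ) (x : Fin (m + n) → ℝ) : ℝ :=
  g₁ (fun i => x (Fin.castAdd n i)) * g₂ (fun j => x (Fin.natAdd m j))

section finTensor

variable {g₁ : (Fin m → ℝ) → ℝ} {g₂ : (Fin n → ℝ) → ℝ}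

theorem finTensor_finAppend (p : (Fin m → ℝ) × (Fin n → ℝ)) :
    finTensor g₁ g₂ (finAppend ℝ m n p) = g₁ p.1 * g₂ p.2 := by
  simp [finTensor, finAppend_apply]

theorem Measurable.finTensor (h₁ : Measurable g₁) (h₂ : Measurable g₂) :
    Measurable (finTensor g₁ g₂) :=
  (h₁.comp (by fun_prop)).mul (h₂.comp (by fun_prop))

theorem finTensor_eq_zero_of_notMem_posOrthant (h₁ : ∀ x ∉ posOrthant m, g₁ x = 0)
    (h₂ : ∀ y ∉ posOrthant n, g₂ y = 0) {x : Fin (m + n) → ℝ} (hx : x ∉ posOrthant (m + n)) :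
    finTensor g₁ g₂ x = 0 := by
  rw [mem_posOrthant_add_iff, not_and_or] at hx
  rcases hx with hx | hx
  · exact mul_eq_zero_of_left (h₁ _ hx) _
  · exact mul_eq_zero_of_right _ (h₂ _ hx)

theorem finTensor_smul {α₁ α₂ lam : ℝ} (hlam : 0 < lam)
    (h₁ : ∀ x ∈ posOrthant m, g₁ (lam • x) = lam ^ α₁ * g₁ x)
    (h₂ : ∀ y ∈ posOrthant n, g₂ (lam • y) = lam ^ α₂ * g₂ y)
    {x : Fin (m + n) → ℝ} (hx : x ∈ posOrthant (m + n)) :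
    finTensor g₁ g₂ (lam • x) = lam ^ (α₁ + α₂) * finTensor g₁ g₂ x := by
  rw [mem_posOrthant_add_iff] at hx
  show g₁ (lam • fun i => x _) * g₂ (lam • fun j => x _) = _
  rw [h₁ _ hx.1, h₂ _ hx.2, Real.rpow_add hlam, finTensor]
  ring

theorem finTensor_not_ae_eq_zero (h₁ : ¬ ∀ᵐ x ∂volume.restrict (posOrthant m), g₁ x = 0)
    (h₂ : ¬ ∀ᵐ y ∂volume.restrict (posOrthant n), g₂ y = 0) :
    ¬ ∀ᵐ x ∂volume.restrict (posOrthant (m + n)), finTensor g₁ g₂ x = 0 := fun h => by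
  have h' := measurePreserving_finAppend_posOrthant.quasiMeasurePreserving.ae h
  simp only [finTensor_finAppend] at h'
  exact not_ae_mul_eq_zero_prod h₁ h₂ h'

theorem integrableOn_finTensor_mul_one_add
    (h₁ : IntegrableOn (fun x => g₁ x * g₁ (1 + x)) (posOrthant m))
    (h₂ : IntegrableOn (fun y => g₂ y * g₂ (1 + y)) (posOrthant n)) :
    IntegrableOn (fun x => finTensor g₁ g₂ x * finTensor g₁ g₂ (1 + x)) (posOrthant (m + n)) := by
  rw [IntegrableOn, ← measurePreserving_finAppend_posOrthant.integrable_comp_emb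
    (finAppend ℝ m n).measurableEmbedding]
  convert h₁.mul_prod h₂ using 2 with p
  simp only [Function.comp_apply, finTensor, finAppend_apply, Pi.add_apply, Fin.append_left,
    Fin.append_right, Pi.one_apply]
  exact mul_mul_mul_comm _ _ _ _

end finTensor

theorem stmt19_general {k₁ k₂ : ℕ} {α₁ α₂ : ℝ}
    {g₁ : (Fin k₁ → ℝ) → ℝ} {g₂ : (Fin k₂ → ℝ) → ℝ}
    (hg₁ : IsGenHermiteKernel k₁ α₁ g₁) (hg₂ : IsGenHermiteKernel k₂ α₂ g₂)
    (hsum : -((k₁ : ℝ) + (k₂ : ℝ) + 1) / 2 < α₁ + α₂) :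
    IsGenHermiteKernel (k₁ + k₂) (α₁ + α₂)
      (fun x => g₁ (fun j => x (Fin.castAdd k₂ j)) * g₂ (fun j => x (Fin.natAdd k₁ j))) :=
  { measurable := hg₁.measurable.finTensor hg₂.measurable
    zero_off _ := finTensor_eq_zero_of_notMem_posOrthant hg₁.zero_off hg₂.zero_off
    nonzero := finTensor_not_ae_eq_zero hg₁.nonzero hg₂.nonzero
    homog _ hlam _ := finTensor_smul hlam (hg₁.homog _ hlam) (hg₂.homog _ hlam)
    alpha_lb := by push_cast; linarith
    alpha_ub := by push_cast; linarith [hg₁.alpha_ub, hg₂.alpha_ub]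
    int_cond := integrableOn_finTensor_mul_one_add hg₁.int_cond hg₂.int_cond }

theorem stmt19 {k₁ k₂ : ℕ} (hk₁ : 1 ≤ k₁) (hk₂ : 1 ≤ k₂) {α₁ α₂ : ℝ}
    {g₁ : (Fin k₁ → ℝ) → ℝ} {g₂ : (Fin k₂ → ℝ) → ℝ}
    (hg₁ : IsGenHermiteKernel k₁ α₁ g₁) (hg₂ : IsGenHermiteKernel k₂ α₂ g₂)
    (hsum : -((k₁ : ℝ) + (k₂ : ℝ) + 1) / 2 < α₁ + α₂) :
    IsGenHermiteKernel (k₁ + k₂) (α₁ + α₂)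
      (fun x => g₁ (fun j => x (Fin.castAdd k₂ j)) * g₂ (fun j => x (Fin.natAdd k₁ j))) :=
  stmt19_general hg₁ hg₂ hsum
end
end
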